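/- Define δ(A) = -a₂₁·Y - a₁₂·X - ½(a₁₁ - a₂₂)·H for A in SL(2,ℂ). Then δ(A) satisfies the gradient property: for every W in sl₂(ℂ), B(δ(A), W) equals the derivative at h = 0 of h ↦ tr(A·exp(hW)), where B is the bilinear form on sl₂(ℂ) given by the matrix [[0,0,-1],[0,-2,0],[-1,0,0]] in the standard basis X, H, Y. -/

import Mathlib

open Matrix

noncomputable def Xb : Matrix (Fin 2) (Fin 2) ℂ := !![0, 1; 0, 0]
noncomputable def Hb : Matrix (Fin 2) (Fin 2) ℂ := !![1, 0; 0, -1]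
noncomputable def Yb : Matrix (Fin 2) (Fin 2) ℂ := !![0, 0; 1, 0]

/-- The gradient δ(A) = -a₂₁·Y - a₁₂·X - ½(a₁₁ - a₂₂)·H. -/
noncomputable def delta (A : Matrix (Fin 2) (Fin 2) ℂ) : Matrix (Fin 2) (Fin 2) ℂ :=
  (-(A 1 0)) • Yb + (-(A 0 1)) • Xb + (-((A 0 0 - A 1 1) / 2)) • Hb

/-- The bilinear form on sl₂(ℂ) given in the standard basis X, H, Y by the matrix
[[0,0,-1],[0,-2,0],[-1,0,0]]; in terms of entries of traceless matrices
(Z = Z01·X + Z00·H + Z10·Y) it is B(Z,W) = -(Z01·W10) - 2·(Z00·W00) - (Z10·W01). -/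
noncomputable def sl2Form (Z W : Matrix (Fin 2) (Fin 2) ℂ) : ℂ :=
  -(Z 0 1 * W 1 0) - 2 * (Z 0 0 * W 0 0) - Z 1 0 * W 0 1

section

-- Any submultiplicative norm will do: `NormedSpace.exp` itself depends only on the topology.
attribute [local instance] Matrix.linftyOpNormedRing Matrix.linftyOpNormedAlgebra

theorem Matrix.hasDerivAt_trace_mul_exp_smul {𝕂 n : Type*} [RCLike 𝕂] [Fintype n]
    [DecidableEq n] (M W : Matrix n n 𝕂) (t : 𝕂) :
    HasDerivAt (fun u : 𝕂 => (M * NormedSpace.exp (u • W)).trace)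
      (M * (NormedSpace.exp (t • W) * W)).trace t :=
  (traceLinearMap n 𝕂 𝕂).toContinuousLinearMap.hasFDerivAt.comp_hasDerivAt t
    ((hasDerivAt_exp_smul_const W t).const_mul M)

end

theorem sl2Form_delta (M W : Matrix (Fin 2) (Fin 2) ℂ) (hW : W.trace = 0) :
    sl2Form (delta M) W = (M * W).trace := by
  rw [trace_fin_two] at hW
  simp only [sl2Form, delta, Xb, Hb, Yb, trace_fin_two, mul_apply, Fin.sum_univ_two,
    Matrix.add_apply, Matrix.smul_apply, of_apply, cons_val', cons_val_zero, cons_val_one,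
    cons_val_fin_one, smul_eq_mul]
  linear_combination (-M 1 1) * hW

/-- δ(A) is the gradient of the trace at A: for every traceless W,
B(δ(A), W) is the derivative at h = 0 of h ↦ tr(A·exp(hW)). -/
theorem delta_is_gradient (A : Matrix.SpecialLinearGroup (Fin 2) ℂ)
    (W : Matrix (Fin 2) (Fin 2) ℂ) (hW : W.trace = 0) :
    HasDerivAt (fun h : ℂ =>
        ((A : Matrix (Fin 2) (Fin 2) ℂ) * NormedSpace.exp (h • W)).trace)
      (sl2Form (delta (A : Matrix (Fin 2) (Fin 2) ℂ)) W) 0 := by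
  rw [sl2Form_delta _ W hW]
  simpa using hasDerivAt_trace_mul_exp_smul (A : Matrix (Fin 2) (Fin 2) ℂ) W 0
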